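/- In the free graded-commutative ℚ-algebra on x₁ (deg 2), x₂ (deg 4), n₁ (deg 11), n₂ (deg 11), n₃ (deg 4l₁+1), n₄ (deg 8l₂+3) with dx₁ = dx₂ = 0, dn₁ = x₁⁴x₂, dn₂ = x₁²x₂² + x₂³, dn₃ = x₁^(2l₁+1), dn₄ = x₂^(2l₂+1) (where l₁, l₂ ≥ 2), the element v = x₁^(2l₁)x₂^(2l₂)n₁n₂ - (x₁^(2l₁+2)x₂ + x₁^(2l₁)x₂²)n₁n₄ + x₁^(2l₁+4)n₂n₄ is closed: d(v) = 0. -/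

import Mathlib

/-!
Every closed even-degree element `c`, hence every polynomial in `x₁, x₂`, commutes with the
odd generators and satisfies `d (c * m) = c * d m`, so
`d (c * nᵢ * nⱼ) = c dnᵢ · nⱼ - c dnⱼ · nᵢ`.
Collecting the terms of `d v` by `n₁, n₂, n₄`, each coefficient is a difference of two equal
monomial expressions in the commuting elements `x₁, x₂`.
-/

open Algebra
open scoped IsMulCommutative

namespace LinearMap

variable {R A : Type*} [CommRing R] [Ring A] [Algebra R A] (d : A →ₗ[R] A)

def mulLeftCentralizer : Subalgebra R A :=
  (Subalgebra.centralizer R {d}).comap (Algebra.lmul R A)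

variable {d}

theorem mem_mulLeftCentralizer {c : A} :
    c ∈ d.mulLeftCentralizer ↔ ∀ m, d (c * m) = c * d m := by
  rw [mulLeftCentralizer, Subalgebra.mem_comap, Subalgebra.mem_centralizer_iff]
  simp only [Set.mem_singleton_iff, forall_eq]
  rw [LinearMap.ext_iff]
  rfl

theorem map_mul_mul_of_mem_mulLeftCentralizer {c n n' : A} (hc : c ∈ d.mulLeftCentralizer)
    (hn : ∀ b, d (n * b) = d n * b - n * d b) (hnn' : Commute n (d n')) :
    d (c * n * n') = c * d n * n' - c * d n' * n := by
  rw [mul_assoc, mem_mulLeftCentralizer.1 hc, hn, hnn'.eq, mul_sub, mul_assoc, mul_assoc]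

end LinearMap

section GradedCommutative

variable {R A : Type*} [CommRing R] [Ring A] [Algebra R A] {𝒜 : ℕ → Submodule R A}

theorem commute_of_mem_of_even
    (hcomm : ∀ (p q : ℕ) (a b : A), a ∈ 𝒜 p → b ∈ 𝒜 q →
      a * b = ((-1 : R) ^ (p * q)) • (b * a))
    {p q : ℕ} (hp : Even p) {a b : A} (ha : a ∈ 𝒜 p) (hb : b ∈ 𝒜 q) : Commute a b := by
  rw [Commute, SemiconjBy, hcomm p q a b ha hb, (hp.mul_right q).neg_one_pow, one_smul]

theorem mem_centralizer_of_mem_of_even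
    (hcomm : ∀ (p q : ℕ) (a b : A), a ∈ 𝒜 p → b ∈ 𝒜 q →
      a * b = ((-1 : R) ^ (p * q)) • (b * a))
    {s : Set A} (hs : ∀ b ∈ s, ∃ q, b ∈ 𝒜 q) {p : ℕ} (hp : Even p) {a : A}
    (ha : a ∈ 𝒜 p) :
    a ∈ Subalgebra.centralizer R s := by
  refine (Subalgebra.mem_centralizer_iff R).2 fun b hb ↦ ?_
  obtain ⟨q, hbq⟩ := hs b hb
  exact (commute_of_mem_of_even hcomm hp ha hbq).eq.symm

variable {d : A →ₗ[R] A}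

theorem mem_mulLeftCentralizer_of_mem_of_even
    (hLeibniz : ∀ (p : ℕ), ∀ a ∈ 𝒜 p, ∀ b : A,
      d (a * b) = d a * b + ((-1 : R) ^ p) • (a * d b))
    {p : ℕ} (hp : Even p) {a : A} (ha : a ∈ 𝒜 p) (hda : d a = 0) :
    a ∈ d.mulLeftCentralizer :=
  LinearMap.mem_mulLeftCentralizer.2 fun b ↦ by
    rw [hLeibniz p a ha b, hda, zero_mul, zero_add, hp.neg_one_pow, one_smul]

theorem map_mul_of_mem_of_odd
    (hLeibniz : ∀ (p : ℕ), ∀ a ∈ 𝒜 p, ∀ b : A,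
      d (a * b) = d a * b + ((-1 : R) ^ p) • (a * d b))
    {p : ℕ} (hp : Odd p) {a : A} (ha : a ∈ 𝒜 p) (b : A) :
    d (a * b) = d a * b - a * d b := by
  rw [hLeibniz p a ha b, hp.neg_one_pow, neg_one_smul, sub_eq_add_neg]

end GradedCommutative

/-- With `a = 2l₁`, `b = 2l₂`, these say that the coefficients of `n₂`, `n₁` and `n₄` in
`d v` vanish. -/
theorem volume_form_relations {S : Type*} [CommSemiring S] (x y : S) (a b : ℕ) :
    x ^ a * y ^ b * (x ^ 4 * y) = x ^ (a + 4) * y ^ (b + 1) ∧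
    x ^ a * y ^ b * (x ^ 2 * y ^ 2 + y ^ 3) =
      (x ^ (a + 2) * y + x ^ a * y ^ 2) * y ^ (b + 1) ∧
    (x ^ (a + 2) * y + x ^ a * y ^ 2) * (x ^ 4 * y) = x ^ (a + 4) * (x ^ 2 * y ^ 2 + y ^ 3) :=
  ⟨by ring, by ring, by ring⟩

theorem Commute.volume_form_relations {A : Type*} [Semiring A] {x y : A} (h : Commute x y)
    (a b : ℕ) :
    x ^ a * y ^ b * (x ^ 4 * y) = x ^ (a + 4) * y ^ (b + 1) ∧
    x ^ a * y ^ b * (x ^ 2 * y ^ 2 + y ^ 3) =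
      (x ^ (a + 2) * y + x ^ a * y ^ 2) * y ^ (b + 1) ∧
    (x ^ (a + 2) * y + x ^ a * y ^ 2) * (x ^ 4 * y) = x ^ (a + 4) * (x ^ 2 * y ^ 2 + y ^ 3) := by
  have : IsMulCommutative (adjoin ℕ {x, y}) := isMulCommutative_adjoin ℕ (by
    rintro u (rfl | rfl) v (rfl | rfl)
    exacts [rfl, h.eq, h.symm.eq, rfl])
  obtain ⟨e₁, e₂, e₃⟩ := _root_.volume_form_relations
    (⟨x, subset_adjoin (by simp)⟩ : adjoin ℕ {x, y}) ⟨y, subset_adjoin (by simp)⟩ a b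
  exact ⟨congrArg Subtype.val e₁, congrArg Subtype.val e₂, congrArg Subtype.val e₃⟩

theorem volume_form_closed_prop1_general (l₁ l₂ : ℕ)
    (A : Type) [Ring A] [Algebra ℚ A]
    (𝒜 : ℕ → Submodule ℚ A)
    (x₁ x₂ n₁ n₂ n₄ : A)
    (hx₁ : x₁ ∈ 𝒜 2) (hx₂ : x₂ ∈ 𝒜 4)
    (hn₁ : n₁ ∈ 𝒜 11) (hn₂ : n₂ ∈ 𝒜 11)
    (hn₄ : n₄ ∈ 𝒜 (8 * l₂ + 3))
    (hcomm : ∀ (p q : ℕ) (a b : A), a ∈ 𝒜 p → b ∈ 𝒜 q →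
      a * b = ((-1 : ℚ) ^ (p * q)) • (b * a))
    (d : A →ₗ[ℚ] A)
    (hLeibniz : ∀ (p : ℕ), ∀ a ∈ 𝒜 p, ∀ b : A,
      d (a * b) = d a * b + ((-1 : ℚ) ^ p) • (a * d b))
    (hdx₁ : d x₁ = 0) (hdx₂ : d x₂ = 0)
    (hdn₁ : d n₁ = x₁ ^ 4 * x₂)
    (hdn₂ : d n₂ = x₁ ^ 2 * x₂ ^ 2 + x₂ ^ 3)
    (hdn₄ : d n₄ = x₂ ^ (2 * l₂ + 1)) :
    d (x₁ ^ (2 * l₁) * x₂ ^ (2 * l₂) * n₁ * n₂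
        - (x₁ ^ (2 * l₁ + 2) * x₂ + x₁ ^ (2 * l₁) * x₂ ^ 2) * n₁ * n₄
        + x₁ ^ (2 * l₁ + 4) * n₂ * n₄) = 0 := by
  set T := d.mulLeftCentralizer ⊓ Subalgebra.centralizer ℚ {n₁, n₂, n₄}
  have hhom : ∀ b ∈ ({n₁, n₂, n₄} : Set A), ∃ q, b ∈ 𝒜 q := by
    rintro b (rfl | rfl | rfl)
    exacts [⟨_, hn₁⟩, ⟨_, hn₂⟩, ⟨_, hn₄⟩]
  have hT : ∀ {p a}, Even p → a ∈ 𝒜 p → d a = 0 → a ∈ T := fun hp ha hda ↦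
    ⟨mem_mulLeftCentralizer_of_mem_of_even hLeibniz hp ha hda,
      mem_centralizer_of_mem_of_even hcomm hhom hp ha⟩
  have hx₁T := hT even_two hx₁ hdx₁
  have hx₂T := hT (by decide) hx₂ hdx₂
  have hcomm_T : ∀ n ∈ ({n₁, n₂, n₄} : Set A), ∀ {c}, c ∈ T → Commute n c :=
    fun n hn _ hc ↦ (Subalgebra.mem_centralizer_iff ℚ).1 hc.2 n hn
  have hdn₂T : d n₂ ∈ T :=
    hdn₂ ▸ add_mem (mul_mem (pow_mem hx₁T _) (pow_mem hx₂T _)) (pow_mem hx₂T _)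
  have hdn₄T : d n₄ ∈ T := hdn₄ ▸ pow_mem hx₂T _
  have hd₁ := map_mul_of_mem_of_odd hLeibniz (by decide) hn₁
  have hd₂ := map_mul_of_mem_of_odd hLeibniz (by decide) hn₂
  have hc₁₂ : x₁ ^ (2 * l₁) * x₂ ^ (2 * l₂) ∈ T :=
    mul_mem (pow_mem hx₁T _) (pow_mem hx₂T _)
  have hc₁₄ : x₁ ^ (2 * l₁ + 2) * x₂ + x₁ ^ (2 * l₁) * x₂ ^ 2 ∈ T :=
    add_mem (mul_mem (pow_mem hx₁T _) hx₂T) (mul_mem (pow_mem hx₁T _) (pow_mem hx₂T _))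
  have hc₂₄ : x₁ ^ (2 * l₁ + 4) ∈ T := pow_mem hx₁T _
  rw [map_add, map_sub,
    d.map_mul_mul_of_mem_mulLeftCentralizer hc₁₂.1 hd₁ (hcomm_T n₁ (by simp) hdn₂T),
    d.map_mul_mul_of_mem_mulLeftCentralizer hc₁₄.1 hd₁ (hcomm_T n₁ (by simp) hdn₄T),
    d.map_mul_mul_of_mem_mulLeftCentralizer hc₂₄.1 hd₂ (hcomm_T n₂ (by simp) hdn₄T)]
  obtain ⟨e₁, e₂, e₃⟩ :=
    (commute_of_mem_of_even hcomm even_two hx₁ hx₂).volume_form_relations (2 * l₁) (2 * l₂)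
  rw [hdn₁, hdn₂, hdn₄, e₁, e₂, e₃]
  abel

/-- In the free graded-commutative ℚ-algebra on `x₁` (deg 2), `x₂` (deg 4), `n₁, n₂` (deg 11),
`n₃` (deg 4l₁+1), `n₄` (deg 8l₂+3) with `dx₁ = dx₂ = 0`, `dn₁ = x₁⁴x₂`,
`dn₂ = x₁²x₂² + x₂³`, `dn₃ = x₁^(2l₁+1)`, `dn₄ = x₂^(2l₂+1)` (where `l₁, l₂ ≥ 2`),
the element
`v = x₁^(2l₁)x₂^(2l₂)n₁n₂ - (x₁^(2l₁+2)x₂ + x₁^(2l₁)x₂²)n₁n₄ + x₁^(2l₁+4)n₂n₄`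
is closed: `d v = 0`. -/
theorem volume_form_closed_prop1 (l₁ l₂ : ℕ) (hl₁ : 2 ≤ l₁) (hl₂ : 2 ≤ l₂)
    (A : Type) [Ring A] [Algebra ℚ A]
    (𝒜 : ℕ → Submodule ℚ A) [GradedAlgebra 𝒜]
    (x₁ x₂ n₁ n₂ n₃ n₄ : A)
    (hx₁ : x₁ ∈ 𝒜 2) (hx₂ : x₂ ∈ 𝒜 4)
    (hn₁ : n₁ ∈ 𝒜 11) (hn₂ : n₂ ∈ 𝒜 11)
    (hn₃ : n₃ ∈ 𝒜 (4 * l₁ + 1)) (hn₄ : n₄ ∈ 𝒜 (8 * l₂ + 3))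
    (hcomm : ∀ (p q : ℕ) (a b : A), a ∈ 𝒜 p → b ∈ 𝒜 q →
      a * b = ((-1 : ℚ) ^ (p * q)) • (b * a))
    (hgen : Algebra.adjoin ℚ ({x₁, x₂, n₁, n₂, n₃, n₄} : Set A) = ⊤)
    (d : A →ₗ[ℚ] A)
    (hdeg : ∀ (p : ℕ), ∀ a ∈ 𝒜 p, d a ∈ 𝒜 (p + 1))
    (hLeibniz : ∀ (p : ℕ), ∀ a ∈ 𝒜 p, ∀ b : A,
      d (a * b) = d a * b + ((-1 : ℚ) ^ p) • (a * d b))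
    (hdx₁ : d x₁ = 0) (hdx₂ : d x₂ = 0)
    (hdn₁ : d n₁ = x₁ ^ 4 * x₂)
    (hdn₂ : d n₂ = x₁ ^ 2 * x₂ ^ 2 + x₂ ^ 3)
    (hdn₃ : d n₃ = x₁ ^ (2 * l₁ + 1))
    (hdn₄ : d n₄ = x₂ ^ (2 * l₂ + 1)) :
    d (x₁ ^ (2 * l₁) * x₂ ^ (2 * l₂) * n₁ * n₂
        - (x₁ ^ (2 * l₁ + 2) * x₂ + x₁ ^ (2 * l₁) * x₂ ^ 2) * n₁ * n₄
        + x₁ ^ (2 * l₁ + 4) * n₂ * n₄) = 0 :=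
  volume_form_closed_prop1_general l₁ l₂ A 𝒜 x₁ x₂ n₁ n₂ n₄ hx₁ hx₂ hn₁ hn₂ hn₄ hcomm d hLeibniz
    hdx₁ hdx₂ hdn₁ hdn₂ hdn₄
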